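/- Core quantitative inequality in the proof of Theorem 1: let P, Q be disjoint finite index sets with P nonempty and Q nonempty, embeddings h_i ∈ ℝ^d (i ∈ P) and h_j ∈ ℝ^d (j ∈ Q), N = |P| + |Q|, τ > 0, and let q = (1/N)( Σ_{i∈P} h_i + Σ_{j∈Q} h_j ) be the mean readout. If ⟨q, h_i⟩ = 1 for every i ∈ P (perfect alignment), then the context-aware contrastive loss satisfies L(q) ≥ −1/τ + (1/(|Q| · N · τ)) · Σ_{j∈Q} ( Σ_{i∈P} ⟨h_i, h_j⟩ + Σ_{k∈Q} ⟨h_k, h_j⟩ ); i.e. the loss is bounded below, up to the constant −1/τ, by the average of the normal–abnormal and abnormal–abnormal similarity sums scaled by 1/(Nτ). -/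

import Mathlib

open Finset Real
open scoped InnerProductSpace

/-! Under perfect alignment every loss term is `log (S + exp (1/τ)) - 1/τ ≥ log S - 1/τ`, where
`S = ∑ j ∈ Q, exp (⟪q, h j⟫ / τ)`. The mean readout turns the similarity sum for `j` into
`N * ⟪q, h j⟫`, so the right-hand side is `-1/τ` plus the mean of the negative logits
`⟪q, h j⟫ / τ`, and a mean is at most a maximum, which is at most the log-sum-exp `log S`. -/

namespace Real

theorem sum_div_card_le_log_sum_exp {ι : Type*} {s : Finset ι} (hs : s.Nonempty) (x : ι → ℝ) :
    (∑ j ∈ s, x j) / #s ≤ log (∑ j ∈ s, exp (x j)) := by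
  have hS : 0 < ∑ j ∈ s, exp (x j) := sum_pos (fun j _ => exp_pos (x j)) hs
  have hle : ∀ j ∈ s, x j ≤ log (∑ j ∈ s, exp (x j)) := fun j hj =>
    (le_log_iff_exp_le hS).2 (single_le_sum (fun k _ => (exp_pos (x k)).le) hj)
  rw [div_le_iff₀ (by exact_mod_cast hs.card_pos), mul_comm, ← nsmul_eq_mul]
  exact sum_le_card_nsmul s x _ hle

theorem log_sub_le_neg_log_exp_div_add_exp {S : ℝ} (hS : 0 < S) (a : ℝ) :
    log S - a ≤ -log (exp a / (S + exp a)) := by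
  rw [log_div (exp_ne_zero a) (by positivity), log_exp, neg_sub]
  gcongr
  linarith [exp_pos a]

end Real

theorem contrastive_loss_similarity_lower_bound_general
    {d : ℕ} {ι : Type*} (P Q : Finset ι)
    (hP : P.Nonempty) (hQ : Q.Nonempty)
    (h : ι → EuclideanSpace ℝ (Fin d)) (τ : ℝ)
    (N : ℕ) (hN : N = P.card + Q.card)
    (q : EuclideanSpace ℝ (Fin d))
    (hq : q = (1 / (N : ℝ)) • (∑ i ∈ P, h i + ∑ j ∈ Q, h j))
    (halign : ∀ i ∈ P, ⟪q, h i⟫_ℝ = 1) :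
    (1 / (P.card : ℝ)) * ∑ i ∈ P,
        -Real.log (Real.exp (⟪q, h i⟫_ℝ / τ) /
          (∑ j ∈ Q, Real.exp (⟪q, h j⟫_ℝ / τ) + Real.exp (⟪q, h i⟫_ℝ / τ)))
      ≥ -1 / τ + (1 / ((Q.card : ℝ) * (N : ℝ) * τ)) *
          ∑ j ∈ Q, (∑ i ∈ P, ⟪h i, h j⟫_ℝ + ∑ k ∈ Q, ⟪h k, h j⟫_ℝ) := by
  have hN0 : (N : ℝ) ≠ 0 := Nat.cast_ne_zero.2 (by have := hP.card_pos; omega)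
  set S := ∑ j ∈ Q, exp (⟪q, h j⟫_ℝ / τ)
  have hS : 0 < S := sum_pos (fun j _ => exp_pos _) hQ
  have hsim (j : ι) : ∑ i ∈ P, ⟪h i, h j⟫_ℝ + ∑ k ∈ Q, ⟪h k, h j⟫_ℝ = N * ⟪q, h j⟫_ℝ := by
    rw [hq, real_inner_smul_left, ← sum_inner, ← sum_inner, ← inner_add_left]
    field_simp
  have hloss : log S - 1 / τ ≤ (1 / #P) * ∑ i ∈ P,
      -log (exp (⟪q, h i⟫_ℝ / τ) / (S + exp (⟪q, h i⟫_ℝ / τ))) := by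
    rw [one_div_mul_eq_div, le_div_iff₀ (by exact_mod_cast hP.card_pos), mul_comm,
      ← nsmul_eq_mul]
    refine card_nsmul_le_sum _ _ _ fun i hi => ?_
    rw [halign i hi]
    exact log_sub_le_neg_log_exp_div_add_exp hS _
  have hmean : (1 / (#Q * N * τ)) * ∑ j ∈ Q, (∑ i ∈ P, ⟪h i, h j⟫_ℝ + ∑ k ∈ Q, ⟪h k, h j⟫_ℝ)
      = (∑ j ∈ Q, ⟪q, h j⟫_ℝ / τ) / #Q := by
    simp_rw [hsim, ← mul_sum, ← sum_div]
    field_simp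
  have hlse : (∑ j ∈ Q, ⟪q, h j⟫_ℝ / τ) / #Q ≤ log S := sum_div_card_le_log_sum_exp hQ _
  rw [ge_iff_le, hmean, neg_div]
  linarith

/-- Core quantitative inequality in the proof of Theorem 1: with the mean readout
`q = (1/N) • (∑ i ∈ P, h i + ∑ j ∈ Q, h j)`, `N = |P| + |Q|`, and perfect
alignment `⟪q, h i⟫ = 1` on positives, the context-aware contrastive loss is
bounded below by `-1/τ` plus the average of the normal–abnormal and
abnormal–abnormal similarity sums scaled by `1/(N·τ)`. -/
theorem contrastive_loss_similarity_lower_bound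
    {d : ℕ} {ι : Type*} (P Q : Finset ι) (hPQ : Disjoint P Q)
    (hP : P.Nonempty) (hQ : Q.Nonempty)
    (h : ι → EuclideanSpace ℝ (Fin d)) (τ : ℝ) (hτ : 0 < τ)
    (N : ℕ) (hN : N = P.card + Q.card)
    (q : EuclideanSpace ℝ (Fin d))
    (hq : q = (1 / (N : ℝ)) • (∑ i ∈ P, h i + ∑ j ∈ Q, h j))
    (halign : ∀ i ∈ P, ⟪q, h i⟫_ℝ = 1) :
    (1 / (P.card : ℝ)) * ∑ i ∈ P,
        -Real.log (Real.exp (⟪q, h i⟫_ℝ / τ) /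
          (∑ j ∈ Q, Real.exp (⟪q, h j⟫_ℝ / τ) + Real.exp (⟪q, h i⟫_ℝ / τ)))
      ≥ -1 / τ + (1 / ((Q.card : ℝ) * (N : ℝ) * τ)) *
          ∑ j ∈ Q, (∑ i ∈ P, ⟪h i, h j⟫_ℝ + ∑ k ∈ Q, ⟪h k, h j⟫_ℝ) :=
  contrastive_loss_similarity_lower_bound_general P Q hP hQ h τ N hN q hq halign
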